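/- Let (Ω, 𝔉, P) be a probability space and T: Ω → Ω a measure-preserving ergodic transformation. Let Θ ⊂ ℝᵖ, fix θ ∈ Θ and δ₀ > 0, and let f: Θ × Ω → ℝ be such that: (i) for each θ′ ∈ Θ, ω ↦ f(θ′, ω) is measurable; (ii) for P-a.e. ω, θ′ ↦ f(θ′, ω) is continuous on B̄(θ, δ₀) ∩ Θ; (iii) ω ↦ sup_{θ′∈B̄(θ,δ₀)∩Θ} |f(θ′, ω)| is P-integrable. Then for P-a.e. ω, lim_{δ↓0} limsup_{n→∞} sup_{θ′∈B̄(θ,δ)∩Θ} | n⁻¹ ∑_{k=1}ⁿ f(θ′, Tᵏω) − ∫_Ω f(θ, ·) dP | = 0. (This is the locally uniform law of large numbers of Lemma 15, used to prove Propositions 2, 4 and 5: Birkhoff averages of a parametrized stationary ergodic sequence converge locally uniformly in the parameter when the L¹ modulus of continuity vanishes.) -/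

import Mathlib

/-!
Birkhoff's theorem is proved from Garsia's maximal inequality: for an invariant set `A` on which
some Birkhoff sum of `g` is positive, `∫_A g ≥ 0`. The set where the Birkhoff sums of `g` are
unbounded above is invariant, so for ergodic `T` and `∫ g < 0` it is null; applied to
`g - c` this bounds the averages above, and to `-g` below.

For the locally uniform statement, choose a countable dense subset `D` of
`K = B̄(θ, δ₀) ∩ Θ` and let `gᵣ(ω) = sup_{d ∈ D, |d - θ| < r} |f(d, ω) - f(θ, ω)|`. It is
measurable, dominated by twice the envelope, and tends to `0` as `r → 0` wherever `f(·, ω)` is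
continuous, so `∫ gᵣ → 0`. By continuity and density, `gᵣ(Tᵏω)` bounds
`|f(θ', Tᵏω) - f(θ, Tᵏω)|` for every `θ' ∈ K` with `|θ' - θ| < r`, so by Birkhoff's theorem for
`f(θ, ·)` and for `gᵣ` the `limsup` in the statement is at most `∫ gᵣ` once `δ < r`.
-/

open MeasureTheory Filter Set Topology

section Birkhoff

variable {Ω : Type*} {T : Ω → Ω} {g : Ω → ℝ}

/-- `maxBirkhoffSum T g n ω = max (0, S₁ ω, …, Sₙ ω)` for the Birkhoff sums `Sₖ` of `g`. -/
noncomputable def maxBirkhoffSum (T : Ω → Ω) (g : Ω → ℝ) : ℕ → Ω → ℝ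
  | 0 => 0
  | n + 1 => fun ω => max 0 (g ω + maxBirkhoffSum T g n (T ω))

lemma maxBirkhoffSum_nonneg (n : ℕ) (ω : Ω) : 0 ≤ maxBirkhoffSum T g n ω := by
  cases n with
  | zero => exact le_rfl
  | succ n => exact le_max_left _ _

lemma maxBirkhoffSum_mono : Monotone (maxBirkhoffSum T g) := by
  refine monotone_nat_of_le_succ fun n => ?_
  induction n with
  | zero => exact maxBirkhoffSum_nonneg 1
  | succ n ih => exact fun ω => max_le_max le_rfl (add_le_add le_rfl (ih (T ω)))

lemma birkhoffSum_le_maxBirkhoffSum {k n : ℕ} (hk : k ≤ n) (ω : Ω) :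
    birkhoffSum T g k ω ≤ maxBirkhoffSum T g n ω := by
  induction n generalizing k ω with
  | zero => simp [Nat.le_zero.mp hk, maxBirkhoffSum]
  | succ n ih =>
    cases k with
    | zero => simpa using maxBirkhoffSum_nonneg (n + 1) ω
    | succ k =>
      rw [birkhoffSum_succ']
      exact le_max_of_le_right (add_le_add le_rfl (ih (Nat.le_of_succ_le_succ hk) (T ω)))

lemma maxBirkhoffSum_sub_comp_le (n : ℕ) (ω : Ω) :
    maxBirkhoffSum T g (n + 1) ω - maxBirkhoffSum T g (n + 1) (T ω) ≤
      {ω | 0 < maxBirkhoffSum T g (n + 1) ω}.indicator g ω := by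
  by_cases hω : ω ∈ {ω | 0 < maxBirkhoffSum T g (n + 1) ω}
  · have hpos : 0 < g ω + maxBirkhoffSum T g n (T ω) := by simpa [maxBirkhoffSum] using hω
    have hM : maxBirkhoffSum T g (n + 1) ω = g ω + maxBirkhoffSum T g n (T ω) :=
      max_eq_right hpos.le
    rw [indicator_of_mem hω, hM]
    linarith [maxBirkhoffSum_mono (T := T) (g := g) n.le_succ (T ω)]
  · rw [indicator_of_notMem hω]
    have hω' : maxBirkhoffSum T g (n + 1) ω ≤ 0 := not_lt.mp hω
    linarith [maxBirkhoffSum_nonneg (T := T) (g := g) (n + 1) (T ω)]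

lemma bddAbove_range_birkhoffSum_comp_iff (ω : Ω) :
    BddAbove (range fun n => birkhoffSum T g n (T ω)) ↔
      BddAbove (range fun n => birkhoffSum T g n ω) := by
  constructor
  · rintro ⟨C, hC⟩
    refine ⟨max 0 (g ω + C), forall_mem_range.mpr fun n => ?_⟩
    cases n with
    | zero => simp
    | succ n =>
      rw [birkhoffSum_succ']
      exact le_max_of_le_right (add_le_add le_rfl (hC (mem_range_self n)))
  · rintro ⟨C, hC⟩
    refine ⟨C - g ω, forall_mem_range.mpr fun n => ?_⟩
    have := hC (mem_range_self (n + 1))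
    rw [birkhoffSum_succ'] at this
    linarith

lemma birkhoffSum_sub_const (c : ℝ) (n : ℕ) (ω : Ω) :
    birkhoffSum T (fun ω => g ω - c) n ω = birkhoffSum T g n ω - n * c := by
  simp [birkhoffSum, Finset.sum_sub_distrib]

variable [MeasurableSpace Ω] {P : Measure Ω}

lemma measurable_maxBirkhoffSum (hT : Measurable T) (hg : Measurable g) (n : ℕ) :
    Measurable (maxBirkhoffSum T g n) := by
  induction n with
  | zero => exact measurable_const
  | succ n ih => exact measurable_const.max (hg.add (ih.comp hT))

lemma integrable_maxBirkhoffSum (hT : MeasurePreserving T P P) (hgi : Integrable g P)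
    (n : ℕ) : Integrable (maxBirkhoffSum T g n) P := by
  induction n with
  | zero => exact integrable_zero _ _ _
  | succ n ih =>
    have h := (hgi.add (hT.integrable_comp_of_integrable ih)).pos_part
    simp only [max_comm _ (0 : ℝ)] at h
    exact h

lemma measurable_birkhoffSum (hT : Measurable T) (hg : Measurable g) (n : ℕ) :
    Measurable (birkhoffSum T g n) :=
  Finset.measurable_sum _ fun k _ => hg.comp (hT.iterate k)

lemma MeasureTheory.MeasurePreserving.integral_comp_of_measurable (hT : MeasurePreserving T P P)
    {h : Ω → ℝ} (hh : Measurable h) : ∫ ω, h (T ω) ∂P = ∫ ω, h ω ∂P := by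
  rw [← integral_map hT.measurable.aemeasurable hh.aestronglyMeasurable, hT.map_eq]

/-- Garsia's maximal ergodic inequality, on an invariant set. -/
theorem setIntegral_inter_maxBirkhoffSum_pos_nonneg (hT : MeasurePreserving T P P)
    (hg : Measurable g) (hgi : Integrable g P) {A : Set Ω} (hA : MeasurableSet A)
    (hTA : T ⁻¹' A = A) (n : ℕ) :
    0 ≤ ∫ ω in A ∩ {ω | 0 < maxBirkhoffSum T g (n + 1) ω}, g ω ∂P := by
  set M := maxBirkhoffSum T g (n + 1)
  have hMm : Measurable M := measurable_maxBirkhoffSum hT.measurable hg (n + 1)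
  have hFi : Integrable (A.indicator M) P := (integrable_maxBirkhoffSum hT hgi (n + 1)).indicator hA
  have hFTi : Integrable (fun ω => A.indicator M (T ω)) P := hT.integrable_comp_of_integrable hFi
  have hpos : MeasurableSet {ω | 0 < M ω} := hMm measurableSet_Ioi
  have hpointwise : ∀ ω, A.indicator M ω - A.indicator M (T ω) ≤
      (A ∩ {ω | 0 < M ω}).indicator g ω := by
    intro ω
    have hTω : T ω ∈ A ↔ ω ∈ A := by rw [← mem_preimage, hTA]
    rw [← indicator_indicator]
    by_cases hω : ω ∈ A
    · simp only [indicator_of_mem hω, indicator_of_mem (hTω.mpr hω)]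
      exact maxBirkhoffSum_sub_comp_le n ω
    · simp only [indicator_of_notMem hω, indicator_of_notMem (mt hTω.mp hω), sub_self, le_refl]
  have h := integral_mono (f := fun ω => A.indicator M ω - A.indicator M (T ω))
    (hFi.sub hFTi) (hgi.indicator (hA.inter hpos)) hpointwise
  rwa [integral_sub hFi hFTi, hT.integral_comp_of_measurable (hMm.indicator hA), sub_self,
    integral_indicator (hA.inter hpos)] at h

theorem setIntegral_nonneg_of_exists_birkhoffSum_pos (hT : MeasurePreserving T P P)
    (hg : Measurable g) (hgi : Integrable g P) {A : Set Ω} (hA : MeasurableSet A)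
    (hTA : T ⁻¹' A = A) (hpos : ∀ ω ∈ A, ∃ n, 0 < birkhoffSum T g n ω) :
    0 ≤ ∫ ω in A, g ω ∂P := by
  set B : ℕ → Set Ω := fun n => A ∩ {ω | 0 < maxBirkhoffSum T g (n + 1) ω}
  have hBm : ∀ n, MeasurableSet (B n) := fun n =>
    hA.inter (measurable_maxBirkhoffSum hT.measurable hg (n + 1) measurableSet_Ioi)
  have hBmono : Monotone B := fun m n hmn =>
    inter_subset_inter_right A fun ω (hω : 0 < _) =>
      hω.trans_le (maxBirkhoffSum_mono (Nat.succ_le_succ hmn) ω)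
  have hBA : ⋃ n, B n = A := by
    refine Subset.antisymm (iUnion_subset fun n => inter_subset_left) fun ω hω => ?_
    obtain ⟨n, hn⟩ := hpos ω hω
    exact mem_iUnion.mpr ⟨n, hω, hn.trans_le (birkhoffSum_le_maxBirkhoffSum n.le_succ ω)⟩
  have hlim := tendsto_setIntegral_of_monotone hBm hBmono hgi.integrableOn
  rw [hBA] at hlim
  exact ge_of_tendsto' hlim fun n => setIntegral_inter_maxBirkhoffSum_pos_nonneg hT hg hgi hA hTA n

theorem ae_bddAbove_birkhoffSum_of_integral_neg (hT : Ergodic T P) (hg : Measurable g)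
    (hgi : Integrable g P) (hneg : ∫ ω, g ω ∂P < 0) :
    ∀ᵐ ω ∂P, BddAbove (range fun n => birkhoffSum T g n ω) := by
  set A := {ω | ¬BddAbove (range fun n => birkhoffSum T g n ω)}
  have hA : MeasurableSet A :=
    (measurableSet_bddAbove_range (measurable_birkhoffSum hT.measurable hg)).compl
  have hTA : T ⁻¹' A = A := by
    ext ω
    exact not_congr (bddAbove_range_birkhoffSum_comp_iff ω)
  have hpos : ∀ ω ∈ A, ∃ n, 0 < birkhoffSum T g n ω := fun ω hω => by
    simpa using not_bddAbove_iff.mp hω 0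
  rcases hT.ae_empty_or_univ hA hTA with hnull | hfull
  · exact measure_eq_zero_iff_ae_notMem.mp (ae_eq_empty.mp hnull) |>.mono fun ω hω => not_not.mp hω
  · have := setIntegral_nonneg_of_exists_birkhoffSum_pos hT.toMeasurePreserving hg hgi hA hTA hpos
    rw [setIntegral_congr_set hfull, setIntegral_univ] at this
    exact absurd hneg this.not_gt

theorem ae_eventually_birkhoffAverage_lt [IsProbabilityMeasure P] (hT : Ergodic T P)
    (hg : Measurable g) (hgi : Integrable g P) {c : ℝ} (hc : ∫ ω, g ω ∂P < c) :
    ∀ᵐ ω ∂P, ∀ᶠ n in atTop, birkhoffAverage ℝ T g n ω < c := by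
  obtain ⟨b, hgb, hbc⟩ := exists_between hc
  have hneg : ∫ ω, g ω - b ∂P < 0 := by
    rw [integral_sub hgi (integrable_const b), integral_const, probReal_univ, one_smul]
    linarith
  filter_upwards [ae_bddAbove_birkhoffSum_of_integral_neg hT (hg.sub_const b)
    (hgi.sub (integrable_const b)) hneg] with ω ⟨C, hC⟩
  have hsmall : ∀ᶠ n : ℕ in atTop, C / n < c - b :=
    (tendsto_const_div_atTop_nhds_zero_nat C).eventually (gt_mem_nhds (sub_pos.mpr hbc))
  filter_upwards [hsmall, eventually_gt_atTop 0] with n hn hn0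
  have hSn : birkhoffSum T g n ω - n * b ≤ C := by
    rw [← birkhoffSum_sub_const]
    exact hC (mem_range_self n)
  have hn0' : (0 : ℝ) < n := Nat.cast_pos.mpr hn0
  rw [birkhoffAverage, smul_eq_mul, inv_mul_eq_div, div_lt_iff₀ hn0']
  rw [div_lt_iff₀ hn0'] at hn
  linarith

theorem ae_eventually_lt_birkhoffAverage [IsProbabilityMeasure P] (hT : Ergodic T P)
    (hg : Measurable g) (hgi : Integrable g P) {c : ℝ} (hc : c < ∫ ω, g ω ∂P) :
    ∀ᵐ ω ∂P, ∀ᶠ n in atTop, c < birkhoffAverage ℝ T g n ω := by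
  have hneg : ∫ ω, (-g) ω ∂P < -c := by simpa [integral_neg] using hc
  filter_upwards [ae_eventually_birkhoffAverage_lt hT hg.neg hgi.neg hneg] with ω h
  simpa [birkhoffAverage_neg] using h

theorem ae_tendsto_birkhoffAverage_of_measurable [IsProbabilityMeasure P] (hT : Ergodic T P)
    (hg : Measurable g) (hgi : Integrable g P) :
    ∀ᵐ ω ∂P, Tendsto (birkhoffAverage ℝ T g · ω) atTop (𝓝 (∫ ω, g ω ∂P)) := by
  have hupper := ae_all_iff.mpr fun q : {q : ℚ // ∫ ω, g ω ∂P < q} =>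
    ae_eventually_birkhoffAverage_lt hT hg hgi q.2
  have hlower := ae_all_iff.mpr fun q : {q : ℚ // q < ∫ ω, g ω ∂P} =>
    ae_eventually_lt_birkhoffAverage hT hg hgi q.2
  filter_upwards [hupper, hlower] with ω hup hlow
  refine tendsto_order.mpr ⟨fun a ha => ?_, fun b hb => ?_⟩
  · obtain ⟨q, haq, hq⟩ := exists_rat_btwn ha
    exact (hlow ⟨q, hq⟩).mono fun n hn => haq.trans hn
  · obtain ⟨q, hq, hqb⟩ := exists_rat_btwn hb
    exact (hup ⟨q, hq⟩).mono fun n hn => hn.trans hqb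

/-- **Birkhoff's pointwise ergodic theorem** for an ergodic transformation. -/
theorem ae_tendsto_birkhoffAverage [IsProbabilityMeasure P] (hT : Ergodic T P)
    (hgi : Integrable g P) :
    ∀ᵐ ω ∂P, Tendsto (birkhoffAverage ℝ T g · ω) atTop (𝓝 (∫ ω, g ω ∂P)) := by
  have hgg := hgi.aemeasurable.ae_eq_mk
  have hmk := ae_tendsto_birkhoffAverage_of_measurable hT hgi.aemeasurable.measurable_mk
    (hgi.congr hgg)
  have havg := ae_all_iff.mpr
    (hT.toMeasurePreserving.quasiMeasurePreserving.birkhoffAverage_ae_eq_of_ae_eq ℝ hgg)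
  filter_upwards [hmk, havg] with ω hω heq
  rw [integral_congr_ae hgg]
  simpa only [heq] using hω

end Birkhoff

lemma abs_birkhoffAverage_le {α : Type*} {T : α → α} {φ ψ : α → ℝ} {x : α}
    (h : ∀ k, |φ (T^[k] x)| ≤ ψ (T^[k] x)) (n : ℕ) :
    |birkhoffAverage ℝ T φ n x| ≤ birkhoffAverage ℝ T ψ n x := by
  simp only [birkhoffAverage, birkhoffSum, smul_eq_mul, abs_mul, abs_inv, Nat.abs_cast]
  exact mul_le_mul_of_nonneg_left
    ((Finset.abs_sum_le_sum_abs _ _).trans (Finset.sum_le_sum fun k _ => h k)) (by positivity)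

lemma inv_mul_sum_Icc_iterate_eq_birkhoffAverage {α : Type*} (T : α → α) (φ : α → ℝ) (n : ℕ)
    (x : α) : (n : ℝ)⁻¹ * ∑ k ∈ Finset.Icc 1 n, φ (T^[k] x) = birkhoffAverage ℝ T φ n (T x) := by
  rw [birkhoffAverage, birkhoffSum, smul_eq_mul, ← Finset.Ico_add_one_right_eq_Icc,
    Finset.sum_Ico_eq_sum_range]
  simp only [add_tsub_cancel_right, add_comm 1, Function.iterate_succ_apply]

lemma limsup_nonneg_of_nonneg {u : ℕ → ℝ} (hu : ∀ n, 0 ≤ u n) : 0 ≤ limsup u atTop := by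
  rw [limsup_eq]
  exact Real.sInf_nonneg fun a ha => (hu _).trans ha.exists.choose_spec

lemma limsup_iSup_abs_sub_le {ι : Type*} [Nonempty ι] {u : ι → ℕ → ℝ} {v w : ℕ → ℝ} {a c : ℝ}
    (huv : ∀ i n, |u i n - v n| ≤ w n) (hv : Tendsto v atTop (𝓝 a))
    (hw : Tendsto w atTop (𝓝 c)) :
    limsup (fun n => ⨆ i, |u i n - a|) atTop ≤ c := by
  have hb : Tendsto (fun n => w n + |v n - a|) atTop (𝓝 c) := by
    simpa using hw.add (hv.sub_const a).abs
  have hle : ∀ n, ⨆ i, |u i n - a| ≤ w n + |v n - a| := fun n =>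
    ciSup_le fun i => (abs_sub_le _ (v n) _).trans (add_le_add (huv i n) le_rfl)
  calc limsup (fun n => ⨆ i, |u i n - a|) atTop ≤ limsup (fun n => w n + |v n - a|) atTop :=
        limsup_le_limsup (Eventually.of_forall hle)
          (isCoboundedUnder_le_of_le atTop fun n => Real.iSup_nonneg fun i => abs_nonneg _)
          hb.isBoundedUnder_le
    _ = c := hb.limsup_eq

lemma tendsto_zero_of_forall_eventually_le {α : Type*} {l : Filter α} {L : α → ℝ} {c : ℕ → ℝ}
    (hL0 : ∀ x, 0 ≤ L x) (hc : Tendsto c atTop (𝓝 0)) (hLc : ∀ m, ∀ᶠ x in l, L x ≤ c m) :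
    Tendsto L l (𝓝 0) := by
  refine tendsto_order.mpr ⟨fun a ha => Eventually.of_forall fun x => ha.trans_le (hL0 x),
    fun b hb => ?_⟩
  obtain ⟨m, hm⟩ := (hc.eventually (gt_mem_nhds hb)).exists
  exact (hLc m).mono fun x hx => hx.trans_lt hm

lemma abs_sub_le_two_mul {a b c : ℝ} (ha : |a| ≤ c) (hb : |b| ≤ c) : |a - b| ≤ 2 * c := by
  linarith [abs_sub a b]

lemma ContinuousOn.le_iSup_inter_of_subset_closure {X : Type*} [TopologicalSpace X] {F : X → ℝ}
    {s D U : Set X} (hF : ContinuousOn F s) (hDs : D ⊆ s) (hsD : s ⊆ closure D) (hU : IsOpen U)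
    (hbdd : BddAbove (range fun d : ↥(D ∩ U) => F d)) {x : X} (hxs : x ∈ s) (hxU : x ∈ U) :
    F x ≤ ⨆ d : ↥(D ∩ U), F d := by
  have hx : x ∈ closure (D ∩ U) := inter_comm U D ▸ hU.inter_closure ⟨hxU, hsD hxs⟩
  have hFx : F x ∈ closure (range fun d : ↥(D ∩ U) => F d) := by
    rw [← image_eq_range]
    exact ((hF x hxs).mono (inter_subset_left.trans hDs)).mem_closure_image hx
  have hne : (range fun d : ↥(D ∩ U) => F d).Nonempty :=
    closure_nonempty_iff.mp ⟨F x, hFx⟩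
  have hub := (isLUB_csSup hne hbdd).1
  rw [← upperBounds_closure] at hub
  exact hub hFx

section LocalOscillation

variable {X Ω : Type*} [PseudoMetricSpace X] {F : X → Ω → ℝ} {D s : Set X} {θ : X}
  {env : Ω → ℝ}

/-- Taking the supremum over a countable `D` rather than the whole ball keeps it measurable in
`ω`. -/
noncomputable def localOscillation (F : X → Ω → ℝ) (D : Set X) (θ : X) (r : ℝ) (ω : Ω) : ℝ :=
  ⨆ d : ↥(D ∩ Metric.ball θ r), |F d ω - F θ ω|

lemma localOscillation_nonneg (r : ℝ) (ω : Ω) : 0 ≤ localOscillation F D θ r ω :=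
  Real.iSup_nonneg fun _ => abs_nonneg _

lemma localOscillation_le (hDs : D ⊆ s) (hθ : θ ∈ s) {ω : Ω}
    (henv : ∀ x ∈ s, |F x ω| ≤ env ω) (r : ℝ) : localOscillation F D θ r ω ≤ 2 * env ω :=
  Real.iSup_le (fun d => abs_sub_le_two_mul (henv d (hDs d.2.1)) (henv θ hθ))
    (by linarith [abs_nonneg (F θ ω), henv θ hθ])

lemma abs_sub_le_localOscillation (hDs : D ⊆ s) (hsD : s ⊆ closure D) (hθ : θ ∈ s) {ω : Ω}
    (hcont : ContinuousOn (F · ω) s) (henv : ∀ x ∈ s, |F x ω| ≤ env ω) {r : ℝ} {x : X}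
    (hx : x ∈ s) (hxr : x ∈ Metric.ball θ r) : |F x ω - F θ ω| ≤ localOscillation F D θ r ω :=
  ((hcont.sub continuousOn_const).abs).le_iSup_inter_of_subset_closure hDs hsD Metric.isOpen_ball
    ⟨2 * env ω, forall_mem_range.mpr fun d =>
      abs_sub_le_two_mul (henv d (hDs d.2.1)) (henv θ hθ)⟩ hx hxr

lemma tendsto_localOscillation (hDs : D ⊆ s) {ω : Ω} (hc : ContinuousWithinAt (F · ω) s θ) :
    Tendsto (fun r => localOscillation F D θ r ω) (𝓝[>] 0) (𝓝 0) := by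
  rw [Metric.continuousWithinAt_iff] at hc
  refine tendsto_order.mpr ⟨fun a ha => Eventually.of_forall fun r =>
    ha.trans_le (localOscillation_nonneg r ω), fun b hb => ?_⟩
  obtain ⟨δ, hδ, hball⟩ := hc (b / 2) (half_pos hb)
  filter_upwards [Ioo_mem_nhdsGT hδ] with r hr
  refine (Real.iSup_le (fun d => ?_) (half_pos hb).le).trans_lt (half_lt_self hb)
  have := hball (hDs d.2.1) ((Metric.mem_ball.mp d.2.2).trans hr.2)
  exact (Real.dist_eq _ _ ▸ this).le

lemma limsup_iSup_abs_birkhoffAverage_sub_le {T : Ω → Ω} (hDs : D ⊆ s) (hsD : s ⊆ closure D)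
    (hθ : θ ∈ s) (henv : ∀ ω, ∀ x ∈ s, |F x ω| ≤ env ω) {ω : Ω}
    (hcont : ∀ k, ContinuousOn (F · (T^[k] ω)) s) {a c r : ℝ}
    (hθω : Tendsto (birkhoffAverage ℝ T (F θ) · ω) atTop (𝓝 a))
    (hoscω : Tendsto (birkhoffAverage ℝ T (localOscillation F D θ r) · ω) atTop (𝓝 c))
    {t : Set X} [Nonempty t] (hts : t ⊆ s ∩ Metric.ball θ r) :
    limsup (fun n => ⨆ x : t, |birkhoffAverage ℝ T (F x) n ω - a|) atTop ≤ c := by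
  refine limsup_iSup_abs_sub_le (fun x n => ?_) hθω hoscω
  have hx := hts x.2
  simpa only [birkhoffAverage_sub, Pi.sub_apply] using abs_birkhoffAverage_le (φ := F x - F θ)
    (fun k => abs_sub_le_localOscillation hDs hsD hθ (hcont k) (henv _) hx.1 hx.2) n

variable [MeasurableSpace Ω] {P : Measure Ω}

lemma measurable_localOscillation (hD : D.Countable) (hDs : D ⊆ s) (hθ : θ ∈ s)
    (hmeas : ∀ x ∈ s, Measurable (F x)) (r : ℝ) : Measurable (localOscillation F D θ r) := by
  have := (hD.mono (inter_subset_left (t := Metric.ball θ r))).to_subtype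
  exact Measurable.iSup fun d => ((hmeas d (hDs d.2.1)).sub (hmeas θ hθ)).abs

lemma integrable_localOscillation (hD : D.Countable) (hDs : D ⊆ s) (hθ : θ ∈ s)
    (hmeas : ∀ x ∈ s, Measurable (F x)) (henv_int : Integrable env P)
    (henv : ∀ ω, ∀ x ∈ s, |F x ω| ≤ env ω) (r : ℝ) :
    Integrable (localOscillation F D θ r) P :=
  (henv_int.const_mul 2).mono' (measurable_localOscillation hD hDs hθ hmeas r).aestronglyMeasurable
    (Eventually.of_forall fun ω => by
      rw [Real.norm_eq_abs, abs_of_nonneg (localOscillation_nonneg r ω)]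
      exact localOscillation_le hDs hθ (henv ω) r)

lemma tendsto_integral_localOscillation (hD : D.Countable) (hDs : D ⊆ s) (hθ : θ ∈ s)
    (hmeas : ∀ x ∈ s, Measurable (F x)) (hcont : ∀ᵐ ω ∂P, ContinuousWithinAt (F · ω) s θ)
    (henv_int : Integrable env P) (henv : ∀ ω, ∀ x ∈ s, |F x ω| ≤ env ω) :
    Tendsto (fun r => ∫ ω, localOscillation F D θ r ω ∂P) (𝓝[>] 0) (𝓝 0) := by
  simpa using tendsto_integral_filter_of_dominated_convergence (fun ω => 2 * env ω)
    (Eventually.of_forall fun r =>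
      (measurable_localOscillation hD hDs hθ hmeas r).aestronglyMeasurable)
    (Eventually.of_forall fun r => Eventually.of_forall fun ω => by
      rw [Real.norm_eq_abs, abs_of_nonneg (localOscillation_nonneg r ω)]
      exact localOscillation_le hDs hθ (henv ω) r)
    (henv_int.const_mul 2) (hcont.mono fun ω hω => tendsto_localOscillation hDs hω)

theorem ae_tendsto_limsup_iSup_abs_birkhoffAverage_sub [TopologicalSpace.SeparableSpace X]
    [IsProbabilityMeasure P] {T : Ω → Ω} (hT : Ergodic T P)
    {Θ : Set X} (hθ : θ ∈ Θ) {δ₀ : ℝ} (hδ₀ : 0 < δ₀) (hmeas : ∀ x ∈ Θ, Measurable (F x))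
    (hcont : ∀ᵐ ω ∂P, ContinuousOn (F · ω) (Metric.closedBall θ δ₀ ∩ Θ))
    (henv_int : Integrable env P) (henv : ∀ ω, ∀ x ∈ Metric.closedBall θ δ₀ ∩ Θ, |F x ω| ≤ env ω) :
    ∀ᵐ ω ∂P, Tendsto (fun δ => limsup (fun n => ⨆ x : ↥(Metric.closedBall θ δ ∩ Θ),
      |birkhoffAverage ℝ T (F x) n ω - ∫ ω', F θ ω' ∂P|) atTop) (𝓝[>] 0) (𝓝 0) := by
  set s := Metric.closedBall θ δ₀ ∩ Θ
  have hθs : θ ∈ s := ⟨Metric.mem_closedBall_self hδ₀.le, hθ⟩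
  have hmeas' : ∀ x ∈ s, Measurable (F x) := fun x hx => hmeas x hx.2
  obtain ⟨D, hDs, hD, hsD⟩ :=
    (TopologicalSpace.IsSeparable.of_separableSpace s).exists_countable_dense_subset
  set r : ℕ → ℝ := fun m => 1 / (m + 1)
  have hr_pos : ∀ m, 0 < r m := fun m => by positivity
  have hr : Tendsto r atTop (𝓝[>] 0) :=
    tendsto_nhdsWithin_iff.mpr ⟨tendsto_one_div_add_atTop_nhds_zero_nat, .of_forall hr_pos⟩
  have hFθ : Integrable (F θ) P := henv_int.mono' (hmeas θ hθ).aestronglyMeasurable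
    (.of_forall fun ω => (Real.norm_eq_abs _).trans_le (henv ω θ hθs))
  have hosc : ∀ m, Integrable (localOscillation F D θ (r m)) P := fun m =>
    integrable_localOscillation hD hDs hθs hmeas' henv_int henv _
  filter_upwards [ae_tendsto_birkhoffAverage hT hFθ,
    ae_all_iff.mpr fun m => ae_tendsto_birkhoffAverage hT (hosc m),
    ae_all_iff.mpr fun k => (hT.toMeasurePreserving.iterate k).quasiMeasurePreserving.ae hcont]
    with ω hθω hoscω hcontω
  refine tendsto_zero_of_forall_eventually_le
    (fun δ => limsup_nonneg_of_nonneg fun n => Real.iSup_nonneg fun _ => abs_nonneg _)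
    ((tendsto_integral_localOscillation hD hDs hθs hmeas' (hcont.mono fun ω h => h θ hθs)
      henv_int henv).comp hr) fun m => ?_
  filter_upwards [Ioo_mem_nhdsGT (lt_min hδ₀ (hr_pos m))] with δ ⟨hδ0, hδ⟩
  have : Nonempty ↥(Metric.closedBall θ δ ∩ Θ) := ⟨⟨θ, Metric.mem_closedBall_self hδ0.le, hθ⟩⟩
  refine limsup_iSup_abs_birkhoffAverage_sub_le hDs hsD hθs henv hcontω hθω (hoscω m)
    fun x ⟨hxδ, hxΘ⟩ => ⟨⟨?_, hxΘ⟩, Metric.closedBall_subset_ball (lt_min_iff.mp hδ).2 hxδ⟩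
  exact Metric.closedBall_subset_closedBall (lt_min_iff.mp hδ).1.le hxδ

end LocalOscillation

theorem locally_uniform_birkhoff
    {Ω : Type*} [MeasurableSpace Ω] (P : Measure Ω) [IsProbabilityMeasure P]
    (T : Ω → Ω) (hT : Ergodic T P)
    (p : ℕ) (Θ : Set (EuclideanSpace ℝ (Fin p)))
    (θ : EuclideanSpace ℝ (Fin p)) (hθ : θ ∈ Θ)
    (δ₀ : ℝ) (hδ₀ : 0 < δ₀)
    (f : EuclideanSpace ℝ (Fin p) → Ω → ℝ)
    (hmeas : ∀ θ' ∈ Θ, Measurable (f θ'))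
    (hcont : ∀ᵐ ω ∂P, ContinuousOn (fun θ' => f θ' ω) (Metric.closedBall θ δ₀ ∩ Θ))
    (hbdd : ∀ ω, BddAbove ((fun θ' => |f θ' ω|) '' (Metric.closedBall θ δ₀ ∩ Θ)))
    (hint : Integrable
      (fun ω => ⨆ θ' : (Metric.closedBall θ δ₀ ∩ Θ : Set (EuclideanSpace ℝ (Fin p))),
        |f θ'.1 ω|) P) :
    ∀ᵐ ω ∂P,
      Tendsto
        (fun δ : ℝ =>
          limsup
            (fun n : ℕ =>
              ⨆ θ' : (Metric.closedBall θ δ ∩ Θ : Set (EuclideanSpace ℝ (Fin p))),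
                |(n : ℝ)⁻¹ * ∑ k ∈ Finset.Icc 1 n, f θ'.1 (T^[k] ω) -
                  ∫ ω', f θ ω' ∂P|)
            atTop)
        (nhdsWithin 0 (Set.Ioi 0)) (nhds 0) := by
  set env : Ω → ℝ := fun ω => ⨆ θ' : (Metric.closedBall θ δ₀ ∩ Θ : Set _), |f θ'.1 ω|
  have henv : ∀ ω, ∀ x ∈ Metric.closedBall θ δ₀ ∩ Θ, |f x ω| ≤ env ω := fun ω x hx =>
    le_ciSup (image_eq_range _ _ ▸ hbdd ω) ⟨x, hx⟩
  filter_upwards [hT.toMeasurePreserving.quasiMeasurePreserving.ae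
    (ae_tendsto_limsup_iSup_abs_birkhoffAverage_sub hT hθ hδ₀ hmeas hcont hint henv)] with ω hω
  simpa only [inv_mul_sum_Icc_iterate_eq_birkhoffAverage] using hω
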